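/- Let φ_j : F_j → F_{j+1} (j = 1, …, k) be consecutive transformations, φ_j of type |α^j| —σ_j→ n_j ←τ_j— |α^{j+1}|, and suppose the type of the vertical composite φ_k ∘ ⋯ ∘ φ₁ is computed by the iterated pasting of pushout squares of the τ_j's against the σ_{j+1}'s, with vertex l; let ξ_j : n_j → l denote the induced map (independent of the path chosen in the pasting diagram). Let Γ(φ_k) ∘ ⋯ ∘ Γ(φ₁) be the composite graph obtained by gluing the standard graphs of the φ_j's along the places corresponding to the common interface functors F₂, …, F_k. If the i-th connected component of Γ(φ_k) ∘ ⋯ ∘ Γ(φ₁) is acyclic and, for every j ∈ {1, …, k} and every x ∈ ξ_j⁻¹{i}, the transformation φ_j is dinatural in its x-th variable, then φ_k ∘ ⋯ ∘ φ₁ is dinatural in its i-th variable. -/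

import Mathlib

open CategoryTheory Opposite

universe v u v' u'

/-- `SignObj B s` is `B` if the sign `s` is `true` (covariant) and `Bᵒᵖ` if `s` is `false`. -/
def SignObj (B : Type u) : Bool → Type u
  | true => B
  | false => Bᵒᵖ

instance signObjCategory (B : Type u) [Category.{v} B] : ∀ s : Bool, Category.{v} (SignObj B s)
  | true => inferInstanceAs (Category.{v} B)
  | false => inferInstanceAs (Category.{v} Bᵒᵖ)

/-- Interpret an object of `B` as an object of `B` or `Bᵒᵖ`, according to a sign. -/
def toSign {B : Type u} : ∀ s : Bool, B → SignObj B s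
  | true, X => X
  | false, X => op X

/-- Forget the sign of an object. -/
def unSign {B : Type u} : ∀ {s : Bool}, SignObj B s → B
  | true, X => X
  | false, X => unop X

/-- A morphism of `B`, pointing in a direction prescribed by a sign. -/
def SignHom {B : Type u} [Category.{v} B] : Bool → B → B → Type v
  | true, X, Y => X ⟶ Y
  | false, X, Y => Y ⟶ X

def toSignHom {B : Type u} [Category.{v} B] : ∀ {s : Bool} {X Y : B},
    SignHom s X Y → (toSign s X ⟶ toSign s Y)
  | true, _, _, f => f
  | false, _, _, f => f.op

def signId {B : Type u} [Category.{v} B] : ∀ (s : Bool) (X : B), SignHom s X X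
  | true, X => 𝟙 X
  | false, X => 𝟙 X

/-- The mixed-variance power category `B^α`. -/
abbrev PowCat (B : Type u) [Category.{v} B] {κ : Type} (α : κ → Bool) : Type u :=
  ∀ j : κ, SignObj B (α j)

/-- The object of `B^α` whose `j`-th entry is `A (σ j)`. -/
abbrev tup {B : Type u} [Category.{v} B] {κ ι : Type} (α : κ → Bool) (σ : κ → ι)
    (A : ι → B) : PowCat B α :=
  fun j => toSign (α j) (A (σ j))

/-- A transformation `φ : F → G` of type `σ, τ`: a family of morphisms
`φ_𝐀 : F (𝐀 σ) ⟶ G (𝐀 τ)` indexed by tuples `𝐀` of objects of `B`. -/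
def Transf {B : Type u} [Category.{v} B] {C : Type u'} [Category.{v'} C] {κa κb ι : Type}
    (α : κa → Bool) (β : κb → Bool) (F : PowCat B α ⥤ C) (G : PowCat B β ⥤ C)
    (σ : κa → ι) (τ : κb → ι) : Type _ :=
  ∀ A : ι → B, F.obj (tup α σ A) ⟶ G.obj (tup β τ A)

/-- The tuple `A` with its `i`-th entry replaced by `X`. -/
abbrev upd {ι : Type} [DecidableEq ι] {B : Type u} (A : ι → B) (i : ι) (X : B) : ι → B :=
  fun k => if k = i then X else A k

/-- The mixed-variance tuple `𝐀[X,Y/i]σ`: entries over the `i`-th variable are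
`e false` in contravariant positions, `e true` in covariant ones. -/
abbrev tupMV {B : Type u} [Category.{v} B] {κ ι : Type} [DecidableEq ι] (α : κ → Bool)
    (σ : κ → ι) (A : ι → B) (i : ι) (e : Bool → B) : PowCat B α :=
  fun j => toSign (α j) (if σ j = i then e (α j) else A (σ j))

def mvHom {B : Type u} [Category.{v} B] {e₁ e₂ : Bool → B}
    (g : e₂ false ⟶ e₁ false) (h : e₁ true ⟶ e₂ true) :
    ∀ s : Bool, SignHom s (e₁ s) (e₂ s)
  | true => h
  | false => g

/-- The canonical morphism `tupMV α σ A i e₁ ⟶ tupMV α σ A i e₂` acting by `h` on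
covariant entries over `i`, (the opposite of) `g` on contravariant entries over `i`, and
the identity elsewhere. -/
def tupMVHom {B : Type u} [Category.{v} B] {κ ι : Type} [DecidableEq ι] (α : κ → Bool)
    (σ : κ → ι) (A : ι → B) (i : ι) (e₁ e₂ : Bool → B)
    (g : e₂ false ⟶ e₁ false) (h : e₁ true ⟶ e₂ true) :
    tupMV α σ A i e₁ ⟶ tupMV α σ A i e₂ :=
  fun j => toSignHom
    (show SignHom (α j) (if σ j = i then e₁ (α j) else A (σ j))
        (if σ j = i then e₂ (α j) else A (σ j)) from
      if hj : σ j = i then by simp only [if_pos hj]; exact mvHom g h (α j)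
      else by simp only [if_neg hj]; exact signId (α j) (A (σ j)))

/-- Dinaturality of a transformation in its `i`-th variable. -/
def DinatAt {B : Type u} [Category.{v} B] {C : Type u'} [Category.{v'} C] {κa κb ι : Type}
    [DecidableEq ι] {α : κa → Bool} {β : κb → Bool} {F : PowCat B α ⥤ C} {G : PowCat B β ⥤ C}
    {σ : κa → ι} {τ : κb → ι} (φ : Transf α β F G σ τ) (i : ι) : Prop :=
  ∀ (A : ι → B) {X Y : B} (f : X ⟶ Y),
    F.map (tupMVHom α σ A i (fun s => bif s then X else Y) (fun _ => X) f (𝟙 X)) ≫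
        φ (upd A i X) ≫
        G.map (tupMVHom β τ A i (fun _ => X) (fun s => bif s then Y else X) (𝟙 X) f) =
      F.map (tupMVHom α σ A i (fun s => bif s then X else Y) (fun _ => Y) (𝟙 Y) f) ≫
        φ (upd A i Y) ≫
        G.map (tupMVHom β τ A i (fun _ => Y) (fun s => bif s then Y else X) f (𝟙 Y))

/-- Vertical composition of transformations along a cocone `ζ, ξ` on their types. -/
def vcomp {B : Type u} [Category.{v} B] {C : Type u'} [Category.{v'} C]
    {κa κb κc ι₁ ι₂ ι : Type} {α : κa → Bool} {β : κb → Bool} {γ : κc → Bool}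
    {F : PowCat B α ⥤ C} {G : PowCat B β ⥤ C} {H : PowCat B γ ⥤ C}
    {σ : κa → ι₁} {τ : κb → ι₁} {η : κb → ι₂} {θ : κc → ι₂}
    (φ : Transf α β F G σ τ) (ψ : Transf β γ G H η θ)
    (ζ : ι₁ → ι) (ξ : ι₂ → ι) (hcomm : ∀ p, ζ (τ p) = ξ (η p)) :
    Transf α γ F H (fun p => ζ (σ p)) (fun p => ξ (θ p)) :=
  fun A =>
    φ (fun x => A (ζ x)) ≫
      eqToHom (congrArg G.obj (by
        funext j
        show toSign (β j) (A (ζ (τ j))) = toSign (β j) (A (ξ (η j)))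
        rw [hcomm j])) ≫
      ψ (fun x => A (ξ x))

section Chain

variable {B : Type u} [Category.{v} B] {C : Type u'} [Category.{v'} C]
  {w : ℕ → ℕ} {α : ∀ j : ℕ, Fin (w j) → Bool} {n : ℕ → ℕ} {l : ℕ}
  (F : ∀ j : ℕ, PowCat B (α j) ⥤ C)
  (σ : ∀ j : ℕ, Fin (w j) → Fin (n j))
  (τ : ∀ j : ℕ, Fin (w (j + 1)) → Fin (n j))
  (ξ : ∀ j : ℕ, Fin (n j) → Fin l)

/-- The reindexed tuple at stage `j` of a chain of consecutive transformations. -/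
def Tm (A : Fin l → B) : ∀ j : ℕ, PowCat B (α j)
  | 0 => tup (α 0) (fun p => ξ 0 (σ 0 p)) A
  | j + 1 => tup (α (j + 1)) (fun p => ξ j (τ j p)) A

theorem Tm_bridge {k : ℕ}
    (hcomm : ∀ j, j < k → ∀ p, ξ j (τ j p) = ξ (j + 1) (σ (j + 1) p))
    (A : Fin l → B) : ∀ j, j ≤ k → Tm σ τ ξ A j = tup (α j) (σ j) (fun x => A (ξ j x))
  | 0, _ => rfl
  | j + 1, hj => by
      funext p
      show toSign (α (j + 1) p) (A (ξ j (τ j p))) =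
        toSign (α (j + 1) p) (A (ξ (j + 1) (σ (j + 1) p)))
      rw [hcomm j hj p]

variable (φ : ∀ j : ℕ, Transf (α j) (α (j + 1)) (F j) (F (j + 1)) (σ j) (τ j))

/-- The partial vertical composite `φ_{j-1} ∘ ⋯ ∘ φ_0` of a chain of consecutive
transformations, reindexed along the cocone `ξ`. -/
def chain {k : ℕ} (hcomm : ∀ j, j < k → ∀ p, ξ j (τ j p) = ξ (j + 1) (σ (j + 1) p))
    (A : Fin l → B) : ∀ j : ℕ, j ≤ k + 1 → ((F 0).obj (Tm σ τ ξ A 0) ⟶ (F j).obj (Tm σ τ ξ A j))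
  | 0, _ => 𝟙 _
  | j + 1, hj =>
      chain hcomm A j (Nat.le_of_succ_le hj) ≫
        eqToHom (congrArg (F j).obj (Tm_bridge σ τ ξ hcomm A j (Nat.lt_succ_iff.mp hj))) ≫
        φ j (fun x => A (ξ j x))

/-- The full vertical composite `φ_k ∘ ⋯ ∘ φ_0`, as a transformation. -/
def chainTransf (k : ℕ) (hcomm : ∀ j, j < k → ∀ p, ξ j (τ j p) = ξ (j + 1) (σ (j + 1) p)) :
    Transf (α 0) (α (k + 1)) (F 0) (F (k + 1))
      (fun p => ξ 0 (σ 0 p)) (fun p => ξ k (τ k p)) :=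
  fun A => chain F σ τ ξ φ hcomm A (k + 1) (le_refl _)

end Chain

section ChainGraph

variable {w : ℕ → ℕ} {n : ℕ → ℕ} {l : ℕ}

/-- Vertices of the composite graph of a chain of transformations: places are the
arguments of the functors `F_j`, transitions the variables of the `φ_j`. -/
abbrev ChainV (w n : ℕ → ℕ) : Type := ((j : ℕ) × Fin (w j)) ⊕ ((j : ℕ) × Fin (n j))

/-- The arcs of the composite graph `Γ(φ_k) ∘ ⋯ ∘ Γ(φ_0)`. -/
def chainArc (k : ℕ) (α : ∀ j : ℕ, Fin (w j) → Bool)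
    (σ : ∀ j : ℕ, Fin (w j) → Fin (n j)) (τ : ∀ j : ℕ, Fin (w (j + 1)) → Fin (n j)) :
    ChainV w n → ChainV w n → Prop
  | .inl ⟨j', p⟩, .inr ⟨j, t⟩ =>
      j ≤ k ∧ ((∃ h : j' = j, σ j (h ▸ p) = t ∧ α j' p = true) ∨
               (∃ h : j' = j + 1, τ j (h ▸ p) = t ∧ α j' p = false))
  | .inr ⟨j, t⟩, .inl ⟨j', p⟩ =>
      j ≤ k ∧ ((∃ h : j' = j, σ j (h ▸ p) = t ∧ α j' p = false) ∨
               (∃ h : j' = j + 1, τ j (h ▸ p) = t ∧ α j' p = true))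
  | _, _ => False

/-- The connected component to which each vertex of the composite chain graph
belongs. -/
def chainCompOf (σ : ∀ j : ℕ, Fin (w j) → Fin (n j)) (τ : ∀ j : ℕ, Fin (w (j + 1)) → Fin (n j))
    (ξ : ∀ j : ℕ, Fin (n j) → Fin l) : ChainV w n → Fin l
  | .inl ⟨0, p⟩ => ξ 0 (σ 0 p)
  | .inl ⟨j + 1, p⟩ => ξ j (τ j p)
  | .inr ⟨j, t⟩ => ξ j t

end ChainGraph


/-! Fix a tuple `A`, the variable `i` and an arrow `f : X ⟶ Y`, and label each variable of each
`φ_j` lying over `i` with `false` (standing for `X`) or `true` (for `Y`). At every place over `i`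
between two consecutive transformations, put the arrow (`f` or an identity) from the label of its
upstream transition to that of its downstream one; it exists when the two labels are ordered
according to the variance of the place. Interleaving the instances of the `φ_j` at the labels with
these arrows gives one morphism per admissible labelling: all labels `false` yields the `X`-side of
the dinaturality hexagon of the composite, all labels `true` its `Y`-side. Switching a transition
over `i` from `false` to `true` does not change the morphism once every transition it feeds is
`true`, because around it the morphism is a side of the dinaturality hexagon of its `φ_j`.
Acyclicity of the component of `i` provides such a transition as long as some label is `false`. -/

/-- A label `false` stands for `X` and `true` for `Y`. The only non-identity arrow is
`f : X ⟶ Y`, so a covariant entry can go from `false` to `true` and a contravariant one from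
`true` to `false`. -/
def SignedLE : Bool → Bool → Bool → Prop
  | true, a, b => a ≤ b
  | false, a, b => b ≤ a

theorem SignedLE.refl (s a : Bool) : SignedLE s a a := by
  cases s <;> exact le_rfl

theorem SignedLE.trans {s a b c : Bool} (h : SignedLE s a b) (h' : SignedLE s b c) :
    SignedLE s a c := by
  cases s
  · exact le_trans h' h
  · exact le_trans h h'

theorem SignedLE.not_left (s t : Bool) : SignedLE s (!s) t := by
  cases s
  · exact Bool.le_true t
  · exact Bool.false_le t

theorem SignedLE.self_right (s t : Bool) : SignedLE s t s := by
  cases s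
  · exact Bool.false_le t
  · exact Bool.le_true t

theorem toSignHom_signId {B : Type u} [Category.{v} B] (s : Bool) (P : B) :
    toSignHom (signId s P) = 𝟙 (toSign s P) := by
  cases s <;> rfl

theorem toSignHom_heq {B : Type u} [Category.{v} B] {s : Bool} {P Q P' Q' : B}
    {m : SignHom s P Q} {m' : SignHom s P' Q'} (hP : P = P') (hQ : Q = Q') (hm : m ≍ m') :
    toSignHom m ≍ toSignHom m' := by
  subst hP hQ
  rw [eq_of_heq hm]

section LabelledTuples

variable {B : Type u} [Category.{v} B] {l : ℕ} (A : Fin l → B) (i : Fin l) {X Y : B} (f : X ⟶ Y)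

def labelArrow : ∀ a b : Bool, a ≤ b → ((bif a then Y else X) ⟶ (bif b then Y else X))
  | false, false, _ => 𝟙 X
  | false, true, _ => f
  | true, true, _ => 𝟙 Y
  | true, false, h => absurd h (by decide)

def labelEntry : ∀ (s a b : Bool), SignedLE s a b →
    SignHom s (bif a then Y else X) (bif b then Y else X)
  | true, a, b, h => labelArrow f a b h
  | false, a, b, h => labelArrow f b a h

theorem labelArrow_comp {a b c : Bool} (h : a ≤ b) (h' : b ≤ c) :
    labelArrow f a b h ≫ labelArrow f b c h' = labelArrow f a c (le_trans h h') := by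
  cases a <;> cases b <;> cases c <;>
    first | exact absurd h (by decide) | exact absurd h' (by decide) | simp [labelArrow]

theorem labelArrow_self (a : Bool) : labelArrow f a a le_rfl = 𝟙 _ := by
  cases a <;> rfl

theorem toSignHom_labelEntry_comp {s a b c : Bool} (h : SignedLE s a b) (h' : SignedLE s b c) :
    toSignHom (labelEntry f s a b h) ≫ toSignHom (labelEntry f s b c h') =
      toSignHom (labelEntry f s a c (h.trans h')) := by
  cases s
  · exact (op_comp ..).symm.trans (congrArg Quiver.Hom.op (labelArrow_comp f h' h))
  · exact labelArrow_comp f h h'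

theorem toSignHom_labelEntry_self (s a : Bool) :
    toSignHom (labelEntry f s a a (SignedLE.refl s a)) = 𝟙 _ := by
  cases s
  · exact congrArg Quiver.Hom.op (labelArrow_self f a)
  · exact labelArrow_self f a

theorem toSignHom_labelEntry_heq {s a b a' b' : Bool} (ha : a = a') (hb : b = b') (h h') :
    toSignHom (labelEntry f s a b h) ≍ toSignHom (labelEntry f s a' b' h') := by
  subst ha hb
  rfl

variable (X Y) in
abbrev labelObj {κ : Type} (α : κ → Bool) (c : κ → Fin l) (a : κ → Bool) : PowCat B α :=
  fun p => toSign (α p) (upd A i (bif a p then Y else X) (c p))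

variable (X Y) in
abbrev labelTuple {ι : Type} (c : ι → Fin l) (g : ι → Bool) : ι → B :=
  fun y => upd A i (bif g y then Y else X) (c y)

variable {κ : Type} (α : κ → Bool)

def labelHom (c : κ → Fin l) (a b : κ → Bool)
    (h : ∀ p, c p = i → SignedLE (α p) (a p) (b p)) :
    labelObj A i X Y α c a ⟶ labelObj A i X Y α c b := fun p =>
  if hp : c p = i then
    eqToHom (congrArg (toSign (α p)) (if_pos hp)) ≫
      toSignHom (labelEntry f (α p) (a p) (b p) (h p hp)) ≫
      eqToHom (congrArg (toSign (α p)) (if_pos hp)).symm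
  else eqToHom ((congrArg (toSign (α p)) (if_neg hp)).trans (congrArg _ (if_neg hp)).symm)

variable {A i α}

theorem labelObj_congr {c : κ → Fin l} {a a' : κ → Bool} (h : ∀ p, c p = i → a p = a' p) :
    labelObj A i X Y α c a = labelObj A i X Y α c a' := by
  funext p
  by_cases hp : c p = i
  · simp [labelObj, upd, hp, h p hp]
  · simp [labelObj, upd, hp]

theorem labelHom_apply_of_eq {c : κ → Fin l} {a b : κ → Bool} (h) {p : κ} (hp : c p = i) :
    labelHom A i f α c a b h p = eqToHom (congrArg (toSign (α p)) (if_pos hp)) ≫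
      toSignHom (labelEntry f (α p) (a p) (b p) (h p hp)) ≫
      eqToHom (congrArg (toSign (α p)) (if_pos hp)).symm :=
  dif_pos hp

theorem labelHom_apply_of_ne {c : κ → Fin l} {a b : κ → Bool} (h) {p : κ} (hp : c p ≠ i) :
    labelHom A i f α c a b h p =
      eqToHom ((congrArg (toSign (α p)) (if_neg hp)).trans (congrArg _ (if_neg hp)).symm) :=
  dif_neg hp

theorem labelHom_apply_heq {c : κ → Fin l} {a b : κ → Bool} (h) {p : κ} (hp : c p = i) :
    labelHom A i f α c a b h p ≍ toSignHom (labelEntry f (α p) (a p) (b p) (h p hp)) :=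
  (conj_eqToHom_iff_heq _ _ (congrArg (toSign (α p)) (if_pos hp))
    (congrArg (toSign (α p)) (if_pos hp))).mp (labelHom_apply_of_eq f h hp)

theorem labelHom_apply_heq_id {c : κ → Fin l} {a b : κ → Bool} (h) {p : κ}
    (hab : c p = i → a p = b p) :
    labelHom A i f α c a b h p ≍ 𝟙 (labelObj A i X Y α c a p) := by
  by_cases hp : c p = i
  · refine (labelHom_apply_heq f h hp).trans ?_
    refine ((toSignHom_labelEntry_heq f rfl (hab hp).symm _ (SignedLE.refl _ _)).trans
      (heq_of_eq (toSignHom_labelEntry_self f _ _))).trans (congr_arg_heq _ ?_)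
    simp [labelObj, upd, hp]
  · rw [labelHom_apply_of_ne f h hp]
    exact eqToHom_heq_id_dom _ _ _

theorem labelHom_comp {c : κ → Fin l} {a b d : κ → Bool} (h₁ h₂) :
    labelHom A i f α c a b h₁ ≫ labelHom A i f α c b d h₂ =
      labelHom A i f α c a d (fun p hp => (h₁ p hp).trans (h₂ p hp)) := by
  ext p
  by_cases hp : c p = i
  · simp [labelHom_apply_of_eq f _ hp, reassoc_of% toSignHom_labelEntry_comp]
  · simp [labelHom_apply_of_ne f _ hp]

theorem labelHom_self {c : κ → Fin l} {a : κ → Bool} (h) :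
    labelHom A i f α c a a h = 𝟙 _ := by
  ext p
  by_cases hp : c p = i
  · simp [labelHom_apply_of_eq f _ hp, toSignHom_labelEntry_self]
  · simp [labelHom_apply_of_ne f _ hp]

theorem labelHom_heq {c : κ → Fin l} {a b a' b' : κ → Bool} (h h')
    (ha : ∀ p, c p = i → a p = a' p) (hb : ∀ p, c p = i → b p = b' p) :
    labelHom A i f α c a b h ≍ labelHom A i f α c a' b' h' := by
  refine Function.hfunext rfl fun p p' hpp => ?_
  cases eq_of_heq hpp
  by_cases hp : c p = i
  · exact (labelHom_apply_heq f h hp).trans ((toSignHom_labelEntry_heq f (ha p hp) (hb p hp) _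
      (h' p hp)).trans (labelHom_apply_heq f h' hp).symm)
  · exact (labelHom_apply_heq_id f h (absurd · hp)).trans ((congr_arg_heq (fun P => 𝟙 P)
      (congrFun (labelObj_congr ha) p)).trans (labelHom_apply_heq_id f h' (absurd · hp)).symm)

theorem labelHom_comp_eqToHom {c c' : κ → Fin l} (hc : c = c') {a b : κ → Bool} (h h') :
    labelHom A i f α c a b h ≫ eqToHom (congrArg (labelObj A i X Y α · b) hc) =
      eqToHom (congrArg (labelObj A i X Y α · a) hc) ≫ labelHom A i f α c' a b h' := by
  subst hc
  simp

end LabelledTuples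

section TupMVAsLabelled

variable {B : Type u} [Category.{v} B] {κ ι : Type} {α : κ → Bool} {σ : κ → ι} {A' : ι → B}
  {x : ι} {l : ℕ} {A : Fin l → B} {i : Fin l} {X Y : B} (f : X ⟶ Y) {c : ι → Fin l}
  {g : ι → Bool} {a₁ a₂ : κ → Bool}

theorem toSign_apply_eq_labelObj (hA' : ∀ y, y ≠ x → A' y = labelTuple A i X Y c g y) {p : κ}
    (hp : σ p ≠ x) (ha : c (σ p) = i → a₁ p = g (σ p)) :
    toSign (α p) (A' (σ p)) = labelObj A i X Y α (fun p => c (σ p)) a₁ p := by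
  by_cases hc : c (σ p) = i
  · simp [labelObj, labelTuple, upd, hA' _ hp, hc, ha hc]
  · simp [labelObj, labelTuple, upd, hA' _ hp, hc]

variable [DecidableEq ι] {e₁ e₂ : Bool → B} {ℓ₁ ℓ₂ : Bool → Bool}

theorem tupMVHom_apply_heq_of_eq (gg : e₂ false ⟶ e₁ false) (hh : e₁ true ⟶ e₂ true) {p : κ}
    (hp : σ p = x) : tupMVHom α σ A' x e₁ e₂ gg hh p ≍ toSignHom (mvHom gg hh (α p)) := by
  unfold tupMVHom
  rw [dif_pos hp]
  exact toSignHom_heq (if_pos hp) (if_pos hp) (by rw [eq_mpr_eq_cast]; exact cast_heq _ _)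

theorem tupMVHom_apply_heq_of_ne (gg : e₂ false ⟶ e₁ false) (hh : e₁ true ⟶ e₂ true) {p : κ}
    (hp : σ p ≠ x) : tupMVHom α σ A' x e₁ e₂ gg hh p ≍ 𝟙 (toSign (α p) (A' (σ p))) := by
  unfold tupMVHom
  rw [dif_neg hp]
  refine (toSignHom_heq (if_neg hp) (if_neg hp) ?_).trans (heq_of_eq (toSignHom_signId _ _))
  rw [eq_mpr_eq_cast]
  exact cast_heq _ _

theorem tupMV_eq_labelObj (hx : c x = i) (hA' : ∀ y, y ≠ x → A' y = labelTuple A i X Y c g y)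
    (he : ∀ s, e₁ s = bif ℓ₁ s then Y else X) (ha : ∀ p, σ p = x → a₁ p = ℓ₁ (α p))
    (ha' : ∀ p, σ p ≠ x → c (σ p) = i → a₁ p = g (σ p)) :
    tupMV α σ A' x e₁ = labelObj A i X Y α (fun p => c (σ p)) a₁ := by
  funext p
  by_cases hp : σ p = x
  · simp [tupMV, labelObj, upd, hp, hx, ha p hp, he]
  · simpa [tupMV, hp] using toSign_apply_eq_labelObj (α := α) hA' hp (ha' p hp)

theorem tupMVHom_heq_labelHom (hx : c x = i) (hA' : ∀ y, y ≠ x → A' y = labelTuple A i X Y c g y)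
    (he₁ : ∀ s, e₁ s = bif ℓ₁ s then Y else X) (he₂ : ∀ s, e₂ s = bif ℓ₂ s then Y else X)
    {gg : e₂ false ⟶ e₁ false} {hh : e₁ true ⟶ e₂ true} (hℓ : ∀ s, SignedLE s (ℓ₁ s) (ℓ₂ s))
    (hent : ∀ s, mvHom gg hh s ≍ labelEntry f s (ℓ₁ s) (ℓ₂ s) (hℓ s))
    (ha₁ : ∀ p, σ p = x → a₁ p = ℓ₁ (α p)) (ha₁' : ∀ p, σ p ≠ x → c (σ p) = i → a₁ p = g (σ p))
    (ha₂ : ∀ p, σ p = x → a₂ p = ℓ₂ (α p)) (ha₂' : ∀ p, σ p ≠ x → c (σ p) = i → a₂ p = g (σ p))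
    (hv : ∀ p, c (σ p) = i → SignedLE (α p) (a₁ p) (a₂ p)) :
    tupMVHom α σ A' x e₁ e₂ gg hh ≍ labelHom A i f α (fun p => c (σ p)) a₁ a₂ hv := by
  refine Function.hfunext rfl fun p p' hpp => ?_
  cases eq_of_heq hpp
  by_cases hp : σ p = x
  · have hcp : c (σ p) = i := hp ▸ hx
    exact (tupMVHom_apply_heq_of_eq gg hh hp).trans ((toSignHom_heq (he₁ _) (he₂ _) (hent _)).trans
      ((toSignHom_labelEntry_heq f (ha₁ p hp).symm (ha₂ p hp).symm _ _).trans
        (labelHom_apply_heq f hv hcp).symm))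
  · exact (tupMVHom_apply_heq_of_ne gg hh hp).trans ((congr_arg_heq (fun P => 𝟙 P)
      (toSign_apply_eq_labelObj hA' hp (ha₁' p hp))).trans (labelHom_apply_heq_id f hv
        fun hc => (ha₁' p hp hc).trans (ha₂' p hp hc).symm).symm)

end TupMVAsLabelled

theorem signedLE_into_corner {κ ι : Type} {l : ℕ} {i : Fin l} {α : κ → Bool} {σ : κ → ι}
    {c : ι → Fin l} {g : ι → Bool} {x : ι} {a : κ → Bool} (ha : ∀ p, σ p = x → a p = !α p)
    (ha' : ∀ p, σ p ≠ x → c (σ p) = i → a p = g (σ p)) (p : κ) (hp : c (σ p) = i) :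
    SignedLE (α p) (a p) (g (σ p)) := by
  by_cases hpx : σ p = x
  · rw [ha p hpx]; exact SignedLE.not_left _ _
  · rw [ha' p hpx hp]; exact SignedLE.refl _ _

theorem signedLE_out_of_corner {κ ι : Type} {l : ℕ} {i : Fin l} {β : κ → Bool} {τ : κ → ι}
    {c : ι → Fin l} {g : ι → Bool} {x : ι} {b : κ → Bool} (hb : ∀ q, τ q = x → b q = β q)
    (hb' : ∀ q, τ q ≠ x → c (τ q) = i → b q = g (τ q)) (q : κ) (hq : c (τ q) = i) :
    SignedLE (β q) (g (τ q)) (b q) := by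
  by_cases hqx : τ q = x
  · rw [hb q hqx]; exact SignedLE.self_right _ _
  · rw [hb' q hqx hq]; exact SignedLE.refl _ _

section Hexagon

variable {B : Type u} [Category.{v} B] {C : Type u'} [Category.{v'} C] {κa κb ι : Type}
  {α : κa → Bool} {β : κb → Bool} {F : PowCat B α ⥤ C} {G : PowCat B β ⥤ C}
  {σ : κa → ι} {τ : κb → ι}

/-- `Transf` is a plain definition, so the morphism type of `ψ A` only appears after unfolding
it; stating it here keeps `simp` and `rw` working on composites. -/
def Transf.app (ψ : Transf α β F G σ τ) (A : ι → B) : F.obj (tup α σ A) ⟶ G.obj (tup β τ A) :=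
  ψ A

theorem Transf.app_congr (ψ : Transf α β F G σ τ) {A₁ A₂ : ι → B} (h : A₁ = A₂) :
    ψ.app A₁ = eqToHom (by rw [h]) ≫ ψ.app A₂ ≫ eqToHom (by rw [h]) := by
  subst h
  simp

variable {l : ℕ} (A : Fin l → B) (i : Fin l) {X Y : B} (f : X ⟶ Y)

def labelSide (ψ : Transf α β F G σ τ) (c : ι → Fin l) (g : ι → Bool) (a : κa → Bool)
    (b : κb → Bool) (ha : ∀ p, c (σ p) = i → SignedLE (α p) (a p) (g (σ p)))
    (hb : ∀ q, c (τ q) = i → SignedLE (β q) (g (τ q)) (b q)) :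
    F.obj (labelObj A i X Y α (fun p => c (σ p)) a) ⟶
      G.obj (labelObj A i X Y β (fun q => c (τ q)) b) :=
  F.map (labelHom A i f α _ a (fun p => g (σ p)) ha) ≫ ψ.app (labelTuple A i X Y c g) ≫
    G.map (labelHom A i f β _ (fun q => g (τ q)) b hb)

variable {A i}

theorem labelSide_congr (ψ : Transf α β F G σ τ) {c : ι → Fin l} {g g' : ι → Bool}
    (hg : ∀ y, c y = i → g y = g' y) {a : κa → Bool} {b : κb → Bool} (ha ha' hb hb') :
    labelSide A i f ψ c g a b ha hb = labelSide A i f ψ c g' a b ha' hb' := by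
  have hσ : ∀ p, c (σ p) = i → g (σ p) = g' (σ p) := fun p => hg (σ p)
  have hτ : ∀ q, c (τ q) = i → g (τ q) = g' (τ q) := fun q => hg (τ q)
  have htuple : labelTuple A i X Y c g = labelTuple A i X Y c g' := by
    funext y
    by_cases hy : c y = i
    · simp [labelTuple, hg y hy]
    · simp [labelTuple, upd, hy]
  rw [labelSide, labelSide, Transf.app_congr ψ htuple,
    (conj_eqToHom_iff_heq _ _ rfl (labelObj_congr hσ)).mpr
      (labelHom_heq f ha ha' (fun _ _ => rfl) hσ),
    (conj_eqToHom_iff_heq _ _ (labelObj_congr hτ) rfl).mpr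
      (labelHom_heq f hb hb' hτ fun _ _ => rfl)]
  simp [eqToHom_map]

variable [DecidableEq ι]

def dinatSide (ψ : Transf α β F G σ τ) (A' : ι → B) (x : ι) (t : Bool) :
    F.obj (tupMV α σ A' x fun s => bif s then X else Y) ⟶
      G.obj (tupMV β τ A' x fun s => bif s then Y else X) :=
  F.map (tupMVHom α σ A' x (fun s => bif s then X else Y) (fun _ => bif t then Y else X)
      (labelArrow f t true (Bool.le_true t)) (labelArrow f false t (Bool.false_le t))) ≫
    ψ.app (upd A' x (bif t then Y else X)) ≫
    G.map (tupMVHom β τ A' x (fun _ => bif t then Y else X) (fun s => bif s then Y else X)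
      (labelArrow f false t (Bool.false_le t)) (labelArrow f t true (Bool.le_true t)))

/-- On literal labels `labelArrow` reduces to `f` or an identity, so the two `dinatSide`s are
verbatim the two sides of the hexagon in `DinatAt`. -/
theorem dinatAt_iff_dinatSide (ψ : Transf α β F G σ τ) (x : ι) :
    DinatAt ψ x ↔ ∀ (A' : ι → B) {X Y : B} (f : X ⟶ Y),
      dinatSide f ψ A' x false = dinatSide f ψ A' x true :=
  Iff.rfl

theorem dinatSide_eq_labelSide (ψ : Transf α β F G σ τ) {c : ι → Fin l} {x : ι} (hx : c x = i)
    {A' : ι → B} {g : ι → Bool} {t : Bool} (hgx : g x = t)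
    (hA' : ∀ y, y ≠ x → A' y = labelTuple A i X Y c g y)
    {a : κa → Bool} (ha : ∀ p, σ p = x → a p = !α p)
    (ha' : ∀ p, σ p ≠ x → c (σ p) = i → a p = g (σ p))
    {b : κb → Bool} (hb : ∀ q, τ q = x → b q = β q)
    (hb' : ∀ q, τ q ≠ x → c (τ q) = i → b q = g (τ q)) :
    dinatSide f ψ A' x t =
      eqToHom (congrArg F.obj (tupMV_eq_labelObj (ℓ₁ := fun s => !s) hx hA'
          (fun s => by cases s <;> rfl) ha ha')) ≫
        labelSide A i f ψ c g a b (signedLE_into_corner ha ha') (signedLE_out_of_corner hb hb') ≫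
        eqToHom (congrArg G.obj
          (tupMV_eq_labelObj (ℓ₁ := id) hx hA' (fun _ => rfl) hb hb')).symm := by
  have hin := tupMVHom_heq_labelHom f (α := α) (σ := σ) (e₁ := fun s => bif s then X else Y)
    (ℓ₁ := fun s => !s) (ℓ₂ := fun _ => t) hx hA' (fun s => by cases s <;> rfl) (fun _ => rfl)
    (gg := labelArrow f t true (Bool.le_true t)) (hh := labelArrow f false t (Bool.false_le t))
    (fun s => SignedLE.not_left s t) (fun s => by cases s <;> rfl) ha ha'
    (fun p hp => by rw [hp, hgx]) (fun _ _ _ => rfl) (signedLE_into_corner ha ha')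
  have hout := tupMVHom_heq_labelHom f (α := β) (σ := τ) (e₂ := fun s => bif s then Y else X)
    (ℓ₁ := fun _ => t) (ℓ₂ := id) hx hA' (fun _ => rfl) (fun _ => rfl)
    (gg := labelArrow f false t (Bool.false_le t)) (hh := labelArrow f t true (Bool.le_true t))
    (fun s => SignedLE.self_right s t) (fun s => by cases s <;> rfl)
    (fun q hq => by rw [hq, hgx]) (fun _ _ _ => rfl) hb hb' (signedLE_out_of_corner hb hb')
  have hupd : upd A' x (bif t then Y else X) = labelTuple A i X Y c g := by
    funext y
    by_cases hy : y = x
    · subst hy; simp [labelTuple, upd, hx, hgx]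
    · simp [upd, hy, hA' y hy]
  have hS := tupMV_eq_labelObj (α := α) (ℓ₁ := fun s => !s) (e₁ := fun s => bif s then X else Y)
    hx hA' (fun s => by cases s <;> rfl) ha ha'
  have hT := tupMV_eq_labelObj (α := β) (ℓ₁ := id) (e₁ := fun s => bif s then Y else X)
    hx hA' (fun _ => rfl) hb hb'
  have hσ := tupMV_eq_labelObj (α := α) (σ := σ) (e₁ := fun _ => bif t then Y else X)
    (ℓ₁ := fun _ => t) hx hA' (fun _ => rfl) (fun p hp => by rw [hp, hgx]) (fun _ _ _ => rfl)
  have hτ := tupMV_eq_labelObj (α := β) (σ := τ) (e₁ := fun _ => bif t then Y else X)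
    (ℓ₁ := fun _ => t) hx hA' (fun _ => rfl) (fun q hq => by rw [hq, hgx]) (fun _ _ _ => rfl)
  rw [dinatSide, (conj_eqToHom_iff_heq _ _ hS hσ).mpr hin,
    (conj_eqToHom_iff_heq _ _ hτ hT).mpr hout, Transf.app_congr ψ hupd]
  simp [labelSide, eqToHom_map]

theorem DinatAt.labelSide_eq {ψ : Transf α β F G σ τ} {x : ι} (hψ : DinatAt ψ x)
    {c : ι → Fin l} (hx : c x = i) {g₀ g₁ : ι → Bool} (h₀ : g₀ x = false) (h₁ : g₁ x = true)
    (hg : ∀ y, y ≠ x → c y = i → g₀ y = g₁ y)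
    {a : κa → Bool} (ha : ∀ p, σ p = x → a p = !α p)
    (ha' : ∀ p, σ p ≠ x → c (σ p) = i → a p = g₀ (σ p))
    {b : κb → Bool} (hb : ∀ q, τ q = x → b q = β q)
    (hb' : ∀ q, τ q ≠ x → c (τ q) = i → b q = g₀ (τ q)) :
    labelSide A i f ψ c g₀ a b (signedLE_into_corner ha ha') (signedLE_out_of_corner hb hb') =
      labelSide A i f ψ c g₁ a b
        (signedLE_into_corner ha fun p hp hc => (ha' p hp hc).trans (hg _ hp hc))
        (signedLE_out_of_corner hb fun q hq hc => (hb' q hq hc).trans (hg _ hq hc)) := by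
  have hA₁ : ∀ y, y ≠ x → labelTuple A i X Y c g₀ y = labelTuple A i X Y c g₁ y := fun y hy => by
    by_cases hc : c y = i
    · simp [labelTuple, hg y hy hc]
    · simp [labelTuple, upd, hc]
  have h := (dinatAt_iff_dinatSide ψ x).mp hψ (labelTuple A i X Y c g₀) f
  rw [dinatSide_eq_labelSide f ψ hx h₀ (fun _ _ => rfl) ha ha' hb hb',
    dinatSide_eq_labelSide f ψ hx h₁ hA₁ ha (fun p hp hc => (ha' p hp hc).trans (hg _ hp hc)) hb
      (fun q hq hc => (hb' q hq hc).trans (hg _ hq hc))] at h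
  rwa [cancel_epi, cancel_mono] at h

end Hexagon

theorem dinatAt_of_labelSide_eq {B : Type u} [Category.{v} B] {C : Type u'} [Category.{v'} C]
    {κa κb : Type} {α : κa → Bool} {β : κb → Bool} {l : ℕ} {σ : κa → Fin l} {τ : κb → Fin l}
    {F : PowCat B α ⥤ C} {G : PowCat B β ⥤ C} (ψ : Transf α β F G σ τ) (i : Fin l)
    (h : ∀ (A : Fin l → B) {X Y : B} (f : X ⟶ Y),
      labelSide A i f ψ id (fun _ => false) (fun p => !α p) β
        (fun _ _ => SignedLE.not_left _ _) (fun _ _ => SignedLE.self_right _ _) =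
      labelSide A i f ψ id (fun _ => true) (fun p => !α p) β
        (fun _ _ => SignedLE.not_left _ _) (fun _ _ => SignedLE.self_right _ _)) :
    DinatAt ψ i := by
  refine (dinatAt_iff_dinatSide ψ i).mpr fun A X Y f => ?_
  have hA : ∀ (t : Bool) y, y ≠ i → A y = labelTuple A i X Y id (fun _ => t) y :=
    fun _ y hy => (if_neg hy).symm
  have hi : id i = i := rfl
  rw [dinatSide_eq_labelSide f ψ hi rfl (hA false) (fun _ _ => rfl) (fun _ hp hc => absurd hc hp)
      (fun _ _ => rfl) (fun _ hq hc => absurd hc hq),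
    dinatSide_eq_labelSide f ψ hi rfl (hA true) (fun _ _ => rfl) (fun _ hp hc => absurd hc hp)
      (fun _ _ => rfl) (fun _ hq hc => absurd hc hq), h A f]

theorem Finset.exists_forall_not_rel_of_acyclic {V : Type*} {R : V → V → Prop}
    (U : Finset V) (hU : U.Nonempty) (h : ∀ v ∈ U, ¬ Relation.TransGen R v v) :
    ∃ m ∈ U, ∀ v ∈ U, ¬ R m v := by
  let r : U → U → Prop := fun a b => Relation.TransGen R b a
  have : IsTrans U r := ⟨fun _ _ _ hab hbc => hbc.trans hab⟩
  have : Std.Irrefl r := ⟨fun a haa => h a a.2 haa⟩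
  obtain ⟨m, -, hm⟩ := (Finite.wellFounded_of_trans_of_irrefl r).has_min Set.univ
    ⟨⟨_, hU.choose_spec⟩, trivial⟩
  exact ⟨m, m.2, fun v hv hmv => hm ⟨v, hv⟩ trivial (Relation.TransGen.single hmv)⟩

section Labellings

variable {w : ℕ → ℕ} {n : ℕ → ℕ} {l : ℕ} (α : ∀ j : ℕ, Fin (w j) → Bool)
  (σ : ∀ j : ℕ, Fin (w j) → Fin (n j)) (τ : ∀ j : ℕ, Fin (w (j + 1)) → Fin (n j))
  (ξ : ∀ j : ℕ, Fin (n j) → Fin l) (k : ℕ) (i : Fin l)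

def placeComp : ∀ j, Fin (w j) → Fin l
  | 0 => fun p => ξ 0 (σ 0 p)
  | j + 1 => fun p => ξ j (τ j p)

/-- The label of the transition upstream of a place of `F j`. At the source interface there is
none: there `!α` gives the start object of the composite hexagon, `X` at covariant and `Y` at
contravariant places. -/
def upstreamLabel (L : (Σ j, Fin (n j)) → Bool) : ∀ j, Fin (w j) → Bool
  | 0 => fun p => !α 0 p
  | j + 1 => fun p => L ⟨j, τ j p⟩

abbrev Admissible (L : (Σ j, Fin (n j)) → Bool) : Prop :=
  ∀ j, j ≤ k → ∀ p, placeComp σ τ ξ j p = i →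
    SignedLE (α j p) (upstreamLabel α τ L j p) (L ⟨j, σ j p⟩)

def Feeds (a b : Σ j, Fin (n j)) : Prop :=
  ∃ v, chainArc k α σ τ (.inr a) v ∧ chainArc k α σ τ v (.inr b)

def unfired (L : (Σ j, Fin (n j)) → Bool) : Finset (Σ j, Fin (n j)) :=
  (Finset.range (k + 1)).sigma fun j => Finset.univ.filter fun y => ξ j y = i ∧ L ⟨j, y⟩ = false

variable {α σ τ ξ k i}

theorem placeComp_eq (hcomm : ∀ j, j < k → ∀ p, ξ j (τ j p) = ξ (j + 1) (σ (j + 1) p)) :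
    ∀ j, j ≤ k → placeComp σ τ ξ j = fun p => ξ j (σ j p)
  | 0, _ => rfl
  | j + 1, hj => funext (hcomm j hj)

theorem signedLE_upstreamLabel_const (t : Bool) (j : ℕ) (p : Fin (w j)) :
    SignedLE (α j p) (upstreamLabel α τ (fun _ : (Σ j, Fin (n j)) => t) j p) t := by
  cases j
  · exact SignedLE.not_left _ _
  · exact SignedLE.refl _ _

variable (i) in
theorem admissible_const (t : Bool) : Admissible α σ τ ξ k i fun _ => t :=
  fun j _ p _ => signedLE_upstreamLabel_const t j p

theorem Feeds.transGen {a b : Σ j, Fin (n j)} (h : Relation.TransGen (Feeds α σ τ k) a b) :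
    Relation.TransGen (chainArc k α σ τ) (.inr a) (.inr b) := by
  induction h with
  | single h => obtain ⟨v, h₁, h₂⟩ := h; exact (Relation.TransGen.single h₁).tail h₂
  | tail _ h ih => obtain ⟨v, h₁, h₂⟩ := h; exact (ih.tail h₁).tail h₂

variable {L : (Σ j, Fin (n j)) → Bool} {j : ℕ} {x : Fin (n j)}

theorem mem_unfired {j : ℕ} {y : Fin (n j)} :
    ⟨j, y⟩ ∈ unfired ξ k i L ↔ j ≤ k ∧ ξ j y = i ∧ L ⟨j, y⟩ = false := by
  simp [unfired]

theorem update_apply_of_fst_ne {j' : ℕ} (h : j' ≠ j) (y : Fin (n j')) (b : Bool) :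
    Function.update L ⟨j, x⟩ b ⟨j', y⟩ = L ⟨j', y⟩ :=
  Function.update_of_ne (fun e => h (congrArg Sigma.fst e)) _ _

theorem update_apply_of_ne {y : Fin (n j)} (h : y ≠ x) (b : Bool) :
    Function.update L ⟨j, x⟩ b ⟨j, y⟩ = L ⟨j, y⟩ :=
  Function.update_of_ne
    (fun e : (⟨j, y⟩ : Σ j, Fin (n j)) = ⟨j, x⟩ => h (eq_of_heq (Sigma.mk.inj_iff.mp e).2)) _ _

theorem upstreamLabel_update {j' : ℕ} (h : j' ≠ j + 1) (b : Bool) :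
    upstreamLabel α τ (Function.update L ⟨j, x⟩ b) j' = upstreamLabel α τ L j' := by
  cases j' with
  | zero => rfl
  | succ j' => exact funext fun p => update_apply_of_fst_ne (by omega) _ _

theorem unfired_update_ssubset (hm : ⟨j, x⟩ ∈ unfired ξ k i L) :
    unfired ξ k i (Function.update L ⟨j, x⟩ true) ⊂ unfired ξ k i L := by
  refine (Finset.ssubset_iff_of_subset ?_).mpr ⟨_, hm, by simp [mem_unfired]⟩
  rintro ⟨j', y⟩ hv
  rw [mem_unfired] at hv ⊢
  refine ⟨hv.1, hv.2.1, ?_⟩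
  by_cases e : (⟨j', y⟩ : Σ j, Fin (n j)) = ⟨j, x⟩
  · simpa [e] using hv.2.2
  · simpa [Function.update_of_ne e] using hv.2.2

theorem upstreamLabel_eq_true_of_sink
    (hcomm : ∀ j, j < k → ∀ p, ξ j (τ j p) = ξ (j + 1) (σ (j + 1) p)) (hj : j ≤ k)
    (hx : ξ j x = i) (hmin : ∀ v ∈ unfired ξ k i L, ¬ Feeds α σ τ k ⟨j, x⟩ v) (p : Fin (w j))
    (hpx : σ j p = x) (hα : α j p = false) : upstreamLabel α τ L j p = true := by
  cases j with
  | zero => simp [upstreamLabel, hα]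
  | succ j =>
    by_contra hne
    refine hmin ⟨j, τ j p⟩ (mem_unfired.mpr ⟨by omega, ?_, by simpa [upstreamLabel] using hne⟩)
      ⟨.inl ⟨j + 1, p⟩, ⟨hj, Or.inl ⟨rfl, hpx, hα⟩⟩, ⟨by omega, Or.inr ⟨rfl, rfl, hα⟩⟩⟩
    rw [hcomm j (by omega) p, hpx, hx]

theorem label_eq_true_of_sink
    (hcomm : ∀ j, j < k → ∀ p, ξ j (τ j p) = ξ (j + 1) (σ (j + 1) p))
    (hx : ξ j x = i) (hmin : ∀ v ∈ unfired ξ k i L, ¬ Feeds α σ τ k ⟨j, x⟩ v)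
    (q : Fin (w (j + 1))) (hqx : τ j q = x) (hα : α (j + 1) q = true) (hj : j < k) :
    L ⟨j + 1, σ (j + 1) q⟩ = true := by
  by_contra hne
  refine hmin ⟨j + 1, σ (j + 1) q⟩ (mem_unfired.mpr ⟨hj, ?_, by simpa using hne⟩)
    ⟨.inl ⟨j + 1, q⟩, ⟨by omega, Or.inr ⟨rfl, hqx, hα⟩⟩, ⟨hj, Or.inl ⟨rfl, rfl, hα⟩⟩⟩
  rw [← hcomm j hj q, hqx, hx]

theorem Admissible.update (hL : Admissible α σ τ ξ k i L)
    (hin : ∀ p, σ j p = x → α j p = false → upstreamLabel α τ L j p = true)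
    (hout : ∀ q, τ j q = x → α (j + 1) q = true → j < k → L ⟨j + 1, σ (j + 1) q⟩ = true) :
    Admissible α σ τ ξ k i (Function.update L ⟨j, x⟩ true) := by
  intro j' hj' p hp
  by_cases h₁ : j' = j + 1
  · subst h₁
    change SignedLE _ (Function.update L ⟨j, x⟩ true ⟨j, τ j p⟩) _
    rw [update_apply_of_fst_ne (j' := j + 1) (by omega)]
    by_cases hpx : τ j p = x
    · rw [hpx, Function.update_self]
      cases hα : α (j + 1) p
      · exact Bool.le_true _
      · simp only [SignedLE, hout p hpx hα (by omega), le_refl]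
    · rw [update_apply_of_ne hpx]
      exact hL (j + 1) hj' p hp
  rw [upstreamLabel_update h₁]
  by_cases h₂ : j' = j
  · subst h₂
    by_cases hpx : σ j' p = x
    · rw [hpx, Function.update_self]
      cases hα : α j' p
      · simp only [SignedLE, hin p hpx hα, le_refl]
      · exact Bool.le_true _
    · rw [update_apply_of_ne hpx]
      exact hL j' hj' p hp
  · rw [update_apply_of_fst_ne h₂]
    exact hL j' hj' p hp

theorem signedLE_upstreamLabel_inCorner (hL : Admissible α σ τ ξ k i L) (hj : j ≤ k)
    (hLx : L ⟨j, x⟩ = false)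
    (hin : ∀ p, σ j p = x → α j p = false → upstreamLabel α τ L j p = true)
    (p : Fin (w j)) (hp : placeComp σ τ ξ j p = i) :
    SignedLE (α j p) (upstreamLabel α τ L j p) (if σ j p = x then !α j p else L ⟨j, σ j p⟩) := by
  by_cases hpx : σ j p = x
  · have h := hL j hj p hp
    rw [hpx, hLx] at h
    rw [if_pos hpx]
    cases hα : α j p
    · rw [hin p hpx hα]; exact le_rfl
    · rw [hα] at h; exact h
  · rw [if_neg hpx]; exact hL j hj p hp

theorem signedLE_outCorner (hLx : L ⟨j, x⟩ = false) {b : Fin (w (j + 1)) → Bool}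
    (hb : ∀ q, ξ j (τ j q) = i → SignedLE (α (j + 1) q) (L ⟨j, τ j q⟩) (b q))
    (hb' : ∀ q, ξ j (τ j q) = i →
      SignedLE (α (j + 1) q) (Function.update L ⟨j, x⟩ true ⟨j, τ j q⟩) (b q))
    (q : Fin (w (j + 1))) (hq : ξ j (τ j q) = i) :
    SignedLE (α (j + 1) q) (if τ j q = x then α (j + 1) q else L ⟨j, τ j q⟩) (b q) := by
  by_cases hqx : τ j q = x
  · have h₀ := hb q hq
    have h₁ := hb' q hq
    rw [hqx, hLx] at h₀
    rw [hqx, Function.update_self] at h₁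
    rw [if_pos hqx]
    cases hα : α (j + 1) q
    · rw [hα] at h₀; exact h₀
    · rw [hα] at h₁; exact h₁
  · rw [if_neg hqx]; exact hb q hq

end Labellings

section ChainComposite

variable {B : Type u} [Category.{v} B] {C : Type u'} [Category.{v'} C]
  {w : ℕ → ℕ} {α : ∀ j : ℕ, Fin (w j) → Bool} {n : ℕ → ℕ} {l : ℕ}
  {F : ∀ j : ℕ, PowCat B (α j) ⥤ C}
  {σ : ∀ j : ℕ, Fin (w j) → Fin (n j)}
  {τ : ∀ j : ℕ, Fin (w (j + 1)) → Fin (n j)}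
  (φ : ∀ j : ℕ, Transf (α j) (α (j + 1)) (F j) (F (j + 1)) (σ j) (τ j))
  {k : ℕ} {ξ : ∀ j : ℕ, Fin (n j) → Fin l}
  (hcomm : ∀ j, j < k → ∀ p, ξ j (τ j p) = ξ (j + 1) (σ (j + 1) p))
  (A : Fin l → B) {i : Fin l} {X Y : B} (f : X ⟶ Y)

def chainUpstream (L : (Σ j, Fin (n j)) → Bool) (hL : Admissible α σ τ ξ k i L) :
    ∀ j, j ≤ k + 1 → ((F 0).obj (labelObj A i X Y (α 0) (placeComp σ τ ξ 0) fun p => !α 0 p) ⟶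
      (F j).obj (labelObj A i X Y (α j) (placeComp σ τ ξ j) (upstreamLabel α τ L j)))
  | 0, _ => 𝟙 _
  | j + 1, hj =>
      chainUpstream L hL j (by omega) ≫
        (F j).map (labelHom A i f (α j) _ _ (fun p => L ⟨j, σ j p⟩) (hL j (by omega)) ≫
          eqToHom (congrArg (labelObj A i X Y (α j) · _) (placeComp_eq hcomm j (by omega)))) ≫
        (φ j).app (labelTuple A i X Y (ξ j) fun y => L ⟨j, y⟩)

def chainPrefix (L : (Σ j, Fin (n j)) → Bool) (hL : Admissible α σ τ ξ k i L) (j : ℕ)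
    (hj : j ≤ k + 1) (b : Fin (w j) → Bool)
    (hb : ∀ p, placeComp σ τ ξ j p = i → SignedLE (α j p) (upstreamLabel α τ L j p) (b p)) :
    (F 0).obj (labelObj A i X Y (α 0) (placeComp σ τ ξ 0) fun p => !α 0 p) ⟶
      (F j).obj (labelObj A i X Y (α j) (placeComp σ τ ξ j) b) :=
  chainUpstream φ hcomm A f L hL j hj ≫ (F j).map (labelHom A i f (α j) _ _ b hb)

def chainComposite (L : (Σ j, Fin (n j)) → Bool) (hL : Admissible α σ τ ξ k i L) :
    (F 0).obj (labelObj A i X Y (α 0) (placeComp σ τ ξ 0) fun p => !α 0 p) ⟶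
      (F (k + 1)).obj (labelObj A i X Y (α (k + 1)) (placeComp σ τ ξ (k + 1)) (α (k + 1))) :=
  chainPrefix φ hcomm A f L hL (k + 1) le_rfl (α (k + 1)) fun _ _ => SignedLE.self_right _ _

theorem chainPrefix_comp_labelHom (L : (Σ j, Fin (n j)) → Bool) (hL : Admissible α σ τ ξ k i L)
    (j : ℕ) (hj : j ≤ k + 1) {b b' : Fin (w j) → Bool} (hb) (hbb') :
    chainPrefix φ hcomm A f L hL j hj b hb ≫ (F j).map (labelHom A i f (α j) _ b b' hbb') =
      chainPrefix φ hcomm A f L hL j hj b' fun p hp => (hb p hp).trans (hbb' p hp) := by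
  simp [chainPrefix, ← Functor.map_comp, labelHom_comp]

theorem chainPrefix_succ (L : (Σ j, Fin (n j)) → Bool) (hL : Admissible α σ τ ξ k i L) (j : ℕ)
    (hj : j ≤ k) (b : Fin (w (j + 1)) → Bool) (hb) :
    chainPrefix φ hcomm A f L hL (j + 1) (by omega) b hb =
      chainPrefix φ hcomm A f L hL j (by omega) (fun p => L ⟨j, σ j p⟩) (hL j hj) ≫
        (F j).map (eqToHom (congrArg (labelObj A i X Y (α j) · _) (placeComp_eq hcomm j hj))) ≫
        (φ j).app (labelTuple A i X Y (ξ j) fun y => L ⟨j, y⟩) ≫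
        (F (j + 1)).map (labelHom A i f (α (j + 1)) (fun q => ξ j (τ j q))
          (fun q => L ⟨j, τ j q⟩) b hb) := by
  -- `placeComp` and `upstreamLabel` at `j + 1` reduce only by unfolding, which `simp` does not
  -- do; the `show` states the last interface arrow in reduced form.
  show (chainUpstream φ hcomm A f L hL j (by omega) ≫
      (F j).map (labelHom A i f (α j) (placeComp σ τ ξ j) (upstreamLabel α τ L j)
        (fun p => L ⟨j, σ j p⟩) (hL j (by omega)) ≫
        eqToHom (congrArg (labelObj A i X Y (α j) · _) (placeComp_eq hcomm j hj))) ≫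
      (φ j).app (labelTuple A i X Y (ξ j) fun y => L ⟨j, y⟩)) ≫
    (F (j + 1)).map (labelHom A i f (α (j + 1)) (fun q => ξ j (τ j q)) (fun q => L ⟨j, τ j q⟩)
      b hb) = _
  simp [chainPrefix]

theorem chainPrefix_succ_eq_labelSide (L : (Σ j, Fin (n j)) → Bool)
    (hL : Admissible α σ τ ξ k i L) (j : ℕ) (hj : j ≤ k) {b : Fin (w (j + 1)) → Bool} (hb)
    {a : Fin (w j) → Bool} {b' : Fin (w (j + 1)) → Bool}
    (ha : ∀ p, placeComp σ τ ξ j p = i → SignedLE (α j p) (upstreamLabel α τ L j p) (a p))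
    (hag : ∀ p, ξ j (σ j p) = i → SignedLE (α j p) (a p) (L ⟨j, σ j p⟩))
    (hgb : ∀ q, ξ j (τ j q) = i → SignedLE (α (j + 1) q) (L ⟨j, τ j q⟩) (b' q))
    (hbb : ∀ q, ξ j (τ j q) = i → SignedLE (α (j + 1) q) (b' q) (b q)) :
    chainPrefix φ hcomm A f L hL (j + 1) (by omega) b hb =
      chainPrefix φ hcomm A f L hL j (by omega) a ha ≫
        (F j).map (eqToHom (congrArg (labelObj A i X Y (α j) · a) (placeComp_eq hcomm j hj))) ≫
        labelSide A i f (φ j) (ξ j) (fun y => L ⟨j, y⟩) a b' hag hgb ≫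
        (F (j + 1)).map (labelHom A i f (α (j + 1)) _ b' b hbb) := by
  have hag' : ∀ p, placeComp σ τ ξ j p = i → SignedLE (α j p) (a p) (L ⟨j, σ j p⟩) := by
    rw [placeComp_eq hcomm j hj]; exact hag
  rw [chainPrefix_succ φ hcomm A f L hL j hj,
    ← chainPrefix_comp_labelHom φ hcomm A f L hL j (by omega) ha hag', ← labelHom_comp f hgb hbb]
  simp only [labelSide, Category.assoc, Functor.map_comp]
  rw [← (F j).map_comp_assoc (labelHom A i f (α j) _ _ _ hag'),
    labelHom_comp_eqToHom f (placeComp_eq hcomm j hj) hag' hag]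
  simp
  rfl

theorem chainPrefix_succ_congr {L L' : (Σ j, Fin (n j)) → Bool} (hL : Admissible α σ τ ξ k i L)
    (hL' : Admissible α σ τ ξ k i L') {j : ℕ} (hj : j ≤ k)
    (heq : ∀ b hb hb', chainPrefix φ hcomm A f L hL j (by omega) b hb =
      chainPrefix φ hcomm A f L' hL' j (by omega) b hb')
    (hagree : ∀ y, ξ j y = i → L ⟨j, y⟩ = L' ⟨j, y⟩) (b : Fin (w (j + 1)) → Bool) (hb hb') :
    chainPrefix φ hcomm A f L hL (j + 1) (by omega) b hb =
      chainPrefix φ hcomm A f L' hL' (j + 1) (by omega) b hb' := by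
  have hup : ∀ p, placeComp σ τ ξ j p = i →
      SignedLE (α j p) (upstreamLabel α τ L' j p) (L ⟨j, σ j p⟩) := fun p hp => by
    rw [hagree _ (by rwa [placeComp_eq hcomm j hj] at hp)]
    exact hL' j hj p hp
  rw [chainPrefix_succ_eq_labelSide φ hcomm A f L hL j hj hb (b' := fun q => L ⟨j, τ j q⟩)
      (hL j hj) (fun p _ => SignedLE.refl _ _) (fun q _ => SignedLE.refl _ _) hb,
    chainPrefix_succ_eq_labelSide φ hcomm A f L' hL' j hj hb' (b' := fun q => L ⟨j, τ j q⟩) hup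
      (fun p hp => by rw [hagree _ hp]; exact SignedLE.refl _ _)
      (fun q hq => by rw [hagree _ hq]; exact SignedLE.refl _ _) hb,
    heq _ (hL j hj) hup, labelSide_congr f (φ j) hagree]

theorem chainPrefix_congr {L L' : (Σ j, Fin (n j)) → Bool} (hL : Admissible α σ τ ξ k i L)
    (hL' : Admissible α σ τ ξ k i L') {m : ℕ} (hm : m ≤ k + 1)
    (heq : ∀ b hb hb', chainPrefix φ hcomm A f L hL m hm b hb =
      chainPrefix φ hcomm A f L' hL' m hm b hb') {m' : ℕ} (hmm' : m ≤ m') (hm' : m' ≤ k + 1)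
    (hagree : ∀ j, m ≤ j → j < m' → ∀ y, ξ j y = i → L ⟨j, y⟩ = L' ⟨j, y⟩) (b hb hb') :
    chainPrefix φ hcomm A f L hL m' hm' b hb = chainPrefix φ hcomm A f L' hL' m' hm' b hb' := by
  induction m', hmm' using Nat.le_induction with
  | base => exact heq b hb hb'
  | succ j hmj ih =>
    exact chainPrefix_succ_congr φ hcomm A f hL hL' (by omega)
      (ih (by omega) fun j' h₁ h₂ => hagree j' h₁ (by omega)) (hagree j hmj (by omega)) b hb hb'

theorem chainPrefix_succ_update {L : (Σ j, Fin (n j)) → Bool} (hL : Admissible α σ τ ξ k i L)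
    {j : ℕ} {x : Fin (n j)}
    (hin : ∀ p, σ j p = x → α j p = false → upstreamLabel α τ L j p = true)
    (hout : ∀ q, τ j q = x → α (j + 1) q = true → j < k → L ⟨j + 1, σ (j + 1) q⟩ = true)
    (hj : j ≤ k) (hx : ξ j x = i) (hLx : L ⟨j, x⟩ = false) (hφ : DinatAt (φ j) x)
    (hbelow : ∀ b hb hb', chainPrefix φ hcomm A f L hL j (by omega) b hb =
      chainPrefix φ hcomm A f _ (hL.update hin hout) j (by omega) b hb')
    (b : Fin (w (j + 1)) → Bool) (hb hb') :
    chainPrefix φ hcomm A f L hL (j + 1) (by omega) b hb =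
      chainPrefix φ hcomm A f _ (hL.update hin hout) (j + 1) (by omega) b hb' := by
  have ha := signedLE_upstreamLabel_inCorner hL hj hLx hin
  have ha' : ∀ p, placeComp σ τ ξ j p = i → SignedLE (α j p)
      (upstreamLabel α τ (Function.update L ⟨j, x⟩ true) j p)
      (if σ j p = x then !α j p else L ⟨j, σ j p⟩) := by
    rw [upstreamLabel_update (by omega)]; exact ha
  have hagree : ∀ y, y ≠ x → L ⟨j, y⟩ = Function.update L ⟨j, x⟩ true ⟨j, y⟩ :=
    fun y hy => (update_apply_of_ne hy true).symm
  let a := fun p => if σ j p = x then !α j p else L ⟨j, σ j p⟩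
  let b' := fun q => if τ j q = x then α (j + 1) q else L ⟨j, τ j q⟩
  have hag : ∀ p, ξ j (σ j p) = i → SignedLE (α j p) (a p) (L ⟨j, σ j p⟩) :=
    signedLE_into_corner (σ := σ j) (c := ξ j) (g := fun y => L ⟨j, y⟩) (a := a)
      (fun p hp => if_pos hp) fun p hp _ => if_neg hp
  have hgb : ∀ q, ξ j (τ j q) = i → SignedLE (α (j + 1) q) (L ⟨j, τ j q⟩) (b' q) :=
    signedLE_out_of_corner (τ := τ j) (c := ξ j) (g := fun y => L ⟨j, y⟩) (b := b')
      (fun q hq => if_pos hq) fun q hq _ => if_neg hq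
  have hag' : ∀ p, ξ j (σ j p) = i →
      SignedLE (α j p) (a p) (Function.update L ⟨j, x⟩ true ⟨j, σ j p⟩) :=
    signedLE_into_corner (σ := σ j) (c := ξ j) (a := a)
      (g := fun y => Function.update L ⟨j, x⟩ true ⟨j, y⟩) (fun p hp => if_pos hp)
      fun p hp _ => (if_neg hp).trans (hagree _ hp)
  have hgb' : ∀ q, ξ j (τ j q) = i →
      SignedLE (α (j + 1) q) (Function.update L ⟨j, x⟩ true ⟨j, τ j q⟩) (b' q) :=
    signedLE_out_of_corner (τ := τ j) (c := ξ j) (b := b')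
      (g := fun y => Function.update L ⟨j, x⟩ true ⟨j, y⟩) (fun q hq => if_pos hq)
      fun q hq _ => (if_neg hq).trans (hagree _ hq)
  rw [chainPrefix_succ_eq_labelSide φ hcomm A f L hL j hj hb ha hag hgb
      (signedLE_outCorner hLx hb hb'),
    chainPrefix_succ_eq_labelSide φ hcomm A f _ _ j hj hb' ha' hag' hgb'
      (signedLE_outCorner hLx hb hb'),
    hbelow _ ha ha', hφ.labelSide_eq f hx (g₁ := fun y => Function.update L ⟨j, x⟩ true ⟨j, y⟩)
      hLx (Function.update_self _ _ _) (fun y hy _ => hagree y hy) (fun p hp => if_pos hp)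
      (fun p hp _ => if_neg hp) (fun q hq => if_pos hq) (fun q hq _ => if_neg hq)]

theorem chainComposite_update {L : (Σ j, Fin (n j)) → Bool} (hL : Admissible α σ τ ξ k i L)
    {j : ℕ} {x : Fin (n j)}
    (hin : ∀ p, σ j p = x → α j p = false → upstreamLabel α τ L j p = true)
    (hout : ∀ q, τ j q = x → α (j + 1) q = true → j < k → L ⟨j + 1, σ (j + 1) q⟩ = true)
    (hj : j ≤ k) (hx : ξ j x = i) (hLx : L ⟨j, x⟩ = false) (hφ : DinatAt (φ j) x) :
    chainComposite φ hcomm A f L hL = chainComposite φ hcomm A f _ (hL.update hin hout) := by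
  have hagree : ∀ j', j' ≠ j → ∀ y, L ⟨j', y⟩ = Function.update L ⟨j, x⟩ true ⟨j', y⟩ :=
    fun j' hj' y => (update_apply_of_fst_ne hj' y true).symm
  have hbelow := chainPrefix_congr φ hcomm A f hL (hL.update hin hout) (Nat.zero_le _)
    (fun _ _ _ => rfl) (m' := j) (Nat.zero_le _) (by omega)
    fun j' _ hj' y _ => hagree j' (by omega) y
  exact chainPrefix_congr φ hcomm A f hL (hL.update hin hout) (by omega)
    (chainPrefix_succ_update φ hcomm A f hL hin hout hj hx hLx hφ hbelow) (by omega) le_rfl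
    (fun j' hj' _ y _ => hagree j' (by omega) y) _ _ _

variable (i) in
theorem chainPrefix_const_heq (t : Bool) (j : ℕ) (hj : j ≤ k + 1) :
    chainPrefix φ hcomm A f _ (admissible_const i t) j hj (fun _ => t)
        (fun p _ => signedLE_upstreamLabel_const t j p) ≍
      (F 0).map (labelHom A i f (α 0) (placeComp σ τ ξ 0) (fun p => !α 0 p) (fun _ => t)
          (fun _ _ => SignedLE.not_left _ _)) ≫
        chain F σ τ ξ φ hcomm (labelTuple A i X Y id fun _ => t) j hj := by
  induction j with
  | zero =>
    simp only [chainPrefix, chainUpstream, chain]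
    exact heq_of_eq ((Category.id_comp _).trans (Category.comp_id _).symm)
  | succ j ih =>
    rw [chainPrefix_succ φ hcomm A f _ _ j (by omega)]
    erw [labelHom_self, CategoryTheory.Functor.map_id, Category.comp_id]
    rw [eqToHom_map, ← Category.assoc]
    refine (heq_comp (f' := (F 0).map (labelHom A i f (α 0) (placeComp σ τ ξ 0)
        (fun p => !α 0 p) (fun _ => t) (fun _ _ => SignedLE.not_left _ _)) ≫
        chain F σ τ ξ φ hcomm (labelTuple A i X Y id fun _ => t) j (by omega) ≫
        eqToHom (congrArg (F j).obj (Tm_bridge σ τ ξ hcomm _ j (by omega))))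
      rfl rfl rfl ?_ HEq.rfl).trans (heq_of_eq ?_)
    · exact ((comp_eqToHom_heq _ _).trans (ih (by omega))).trans
        ((heq_of_eq (Category.assoc _ _ _).symm).trans (comp_eqToHom_heq _ _)).symm
    · erw [Category.assoc, Category.assoc]
      rfl

variable (i) in
theorem chainComposite_const (t : Bool) :
    chainComposite φ hcomm A f _ (admissible_const i t) =
      labelSide A i f (chainTransf F σ τ ξ φ k hcomm) id (fun _ => t) (fun p => !α 0 p)
        (α (k + 1)) (fun _ _ => SignedLE.not_left _ _) (fun _ _ => SignedLE.self_right _ _) := by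
  rw [chainComposite, ← chainPrefix_comp_labelHom φ hcomm A f _ _ (k + 1) le_rfl
      (b := fun _ => t) (fun p _ => signedLE_upstreamLabel_const t _ p)
      (fun _ _ => SignedLE.self_right _ _),
    eq_of_heq (chainPrefix_const_heq φ hcomm A i f t (k + 1) le_rfl)]
  exact Category.assoc _ _ _

theorem chainComposite_eq_const_true
    (hacyclic : ∀ v : ChainV w n, chainCompOf σ τ ξ v = i →
      ¬ Relation.TransGen (chainArc k α σ τ) v v)
    (hdin : ∀ j, j ≤ k → ∀ x : Fin (n j), ξ j x = i → DinatAt (φ j) x)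
    (L : (Σ j, Fin (n j)) → Bool) (hL : Admissible α σ τ ξ k i L) :
    chainComposite φ hcomm A f L hL = chainComposite φ hcomm A f _ (admissible_const i true) := by
  induction hc : (unfired ξ k i L).card using Nat.strong_induction_on generalizing L with
  | _ c ih =>
  rcases (unfired ξ k i L).eq_empty_or_nonempty with hU | hU
  · refine chainPrefix_congr φ hcomm A f hL (admissible_const i true) (Nat.zero_le _)
      (fun _ _ _ => rfl) (m' := k + 1) (Nat.zero_le _) le_rfl (fun j _ hj y hy => ?_) _ _ _
    by_contra hne
    have hmem : (⟨j, y⟩ : Σ j, Fin (n j)) ∈ unfired ξ k i L :=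
      mem_unfired.mpr ⟨by omega, hy, by simpa using hne⟩
    simp [hU] at hmem
  · obtain ⟨⟨j, x⟩, hm, hmin⟩ := Finset.exists_forall_not_rel_of_acyclic _ hU
      fun ⟨j, y⟩ hv hcyc => hacyclic (.inr ⟨j, y⟩) (mem_unfired.mp hv).2.1 (Feeds.transGen hcyc)
    obtain ⟨hj, hx, hLx⟩ := mem_unfired.mp hm
    rw [chainComposite_update φ hcomm A f hL (upstreamLabel_eq_true_of_sink hcomm hj hx hmin)
      (label_eq_true_of_sink hcomm hx hmin) hj hx hLx (hdin j hj x hx)]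
    exact ih _ (hc ▸ Finset.card_lt_card (unfired_update_ssubset hm)) _ _ rfl

end ChainComposite

theorem chain_dinatural_of_acyclic_component_general
    {B : Type u} [Category.{v} B] {C : Type u'} [Category.{v'} C]
    {w : ℕ → ℕ} {α : ∀ j : ℕ, Fin (w j) → Bool} {n : ℕ → ℕ} {l : ℕ}
    (F : ∀ j : ℕ, PowCat B (α j) ⥤ C)
    (σ : ∀ j : ℕ, Fin (w j) → Fin (n j))
    (τ : ∀ j : ℕ, Fin (w (j + 1)) → Fin (n j))
    (φ : ∀ j : ℕ, Transf (α j) (α (j + 1)) (F j) (F (j + 1)) (σ j) (τ j))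
    (k : ℕ) (ξ : ∀ j : ℕ, Fin (n j) → Fin l)
    (hcomm : ∀ j, j < k → ∀ p, ξ j (τ j p) = ξ (j + 1) (σ (j + 1) p))
    (i : Fin l)
    (hacyclic : ∀ v : ChainV w n, chainCompOf σ τ ξ v = i →
      ¬ Relation.TransGen (chainArc k α σ τ) v v)
    (hdin : ∀ j, j ≤ k → ∀ x : Fin (n j), ξ j x = i → DinatAt (φ j) x) :
    DinatAt (chainTransf F σ τ ξ φ k hcomm) i := by
  refine dinatAt_of_labelSide_eq _ i fun A X Y f => ?_
  rw [← chainComposite_const φ hcomm A i f false, ← chainComposite_const φ hcomm A i f true]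
  exact chainComposite_eq_const_true φ hcomm A f hacyclic hdin _ _

/-- Let `φ_0, …, φ_k` be consecutive transformations whose composite
type is computed by a pasting of pushouts with vertex `Fin l` and induced maps `ξ_j`.
If the `i`-th connected component of the composite graph `Γ(φ_k) ∘ ⋯ ∘ Γ(φ_0)` is
acyclic and each `φ_j` is dinatural in every one of its variables lying over `i`, then
the vertical composite `φ_k ∘ ⋯ ∘ φ_0` is dinatural in its `i`-th variable. -/
theorem chain_dinatural_of_acyclic_component
    {B : Type u} [Category.{v} B] {C : Type u'} [Category.{v'} C]
    {w : ℕ → ℕ} {α : ∀ j : ℕ, Fin (w j) → Bool} {n : ℕ → ℕ} {l : ℕ}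
    (hl : 0 < l) (hn : ∀ j, 0 < n j)
    (F : ∀ j : ℕ, PowCat B (α j) ⥤ C)
    (σ : ∀ j : ℕ, Fin (w j) → Fin (n j))
    (τ : ∀ j : ℕ, Fin (w (j + 1)) → Fin (n j))
    (φ : ∀ j : ℕ, Transf (α j) (α (j + 1)) (F j) (F (j + 1)) (σ j) (τ j))
    (k : ℕ) (ξ : ∀ j : ℕ, Fin (n j) → Fin l)
    (hcomm : ∀ j, j < k → ∀ p, ξ j (τ j p) = ξ (j + 1) (σ (j + 1) p))
    (hpaste : ∀ (Z : Type) (u : ∀ j : ℕ, Fin (n j) → Z),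
      (∀ j, j < k → ∀ p, u j (τ j p) = u (j + 1) (σ (j + 1) p)) →
      ∃! v : Fin l → Z, ∀ j, j ≤ k → ∀ x, v (ξ j x) = u j x)
    (i : Fin l)
    (hacyclic : ∀ v : ChainV w n, chainCompOf σ τ ξ v = i →
      ¬ Relation.TransGen (chainArc k α σ τ) v v)
    (hdin : ∀ j, j ≤ k → ∀ x : Fin (n j), ξ j x = i → DinatAt (φ j) x) :
    DinatAt (chainTransf F σ τ ξ φ k hcomm) i :=
  chain_dinatural_of_acyclic_component_general F σ τ φ k ξ hcomm i hacyclic hdin
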